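/- Let R be a Noetherian ring, I ⊆ R an ideal, S an R-algebra containing R such that some power of I kills S/R. Let R̂ be the I-adic completion of R and Ŝ := R̂ ⊗_R S. Then the natural map S/R → Ŝ/R̂ is an isomorphism of R-modules, and for every m > 0 the natural map (R : I^m)/I^m → (R̂ : Î^m)/Î^m is an isomorphism. -/

import Mathlib

/-!
As `I` is finitely generated, `I ^ k • R̂` is the kernel of `R̂ → R ⧸ I ^ k`, so every element of
`R̂` is congruent to an element of `R` modulo `I ^ k • R̂`. Hence `R̂ ⊗ S = 1 ⊗ S + I ^ k • Ŝ`,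
and `I ^ n • Ŝ ⊆ R̂` because `I ^ n • S ⊆ R`: this gives the surjectivities. For injectivity,
the map `R̂ ⊗ M → M ⧸ I ^ k • M` sending `x ⊗ m` to (`k`-th component of `x`) `• m` shows that
`1 ⊗ m ∈ I ^ k • (R̂ ⊗ M)` forces `m ∈ I ^ k • M`.
-/

open TensorProduct

theorem Algebra.TensorProduct.smul_top_le_one {R S A : Type*} [CommRing R] [CommRing S]
    [Algebra R S] [CommRing A] [Algebra R A] {J : Ideal R}
    (h : J • (⊤ : Submodule R S) ≤ 1) :
    J • (⊤ : Submodule R (A ⊗[R] S)) ≤ (1 : Submodule A (A ⊗[R] S)).restrictScalars R := by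
  refine Submodule.smul_le.mpr ?_
  rintro z hz t -
  induction t using TensorProduct.induction_on with
  | zero => simp
  | tmul a s =>
    obtain ⟨w, hw⟩ :=
      Submodule.mem_one.mp (h (Submodule.smul_mem_smul hz (Submodule.mem_top (x := s))))
    refine Submodule.mem_one.mpr ⟨w • a, ?_⟩
    rw [smul_tmul', smul_tmul, ← hw, Algebra.TensorProduct.algebraMap_apply,
      Algebra.algebraMap_self, RingHom.id_apply, Algebra.algebraMap_eq_smul_one w, smul_tmul]
  | add t₁ t₂ h₁ h₂ =>
    rw [smul_add]
    exact add_mem h₁ h₂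

namespace AdicCompletion

variable {R : Type*} [CommRing R] {I : Ideal R} {M : Type*} [AddCommGroup M] [Module R M]
variable {S : Type*} [CommRing S] [Algebra R S] {n : ℕ}

theorem exists_sub_algebraMap_mem_pow_smul_top (hI : I.FG) (k : ℕ) (x : AdicCompletion I R) :
    ∃ r : R, x - algebraMap R (AdicCompletion I R) r ∈
      I ^ k • (⊤ : Submodule R (AdicCompletion I R)) := by
  obtain ⟨r, hr⟩ := Submodule.Quotient.mk_surjective _ (eval I R k x)
  refine ⟨r, ?_⟩
  rw [pow_smul_top_eq_ker_eval hI, LinearMap.mem_ker, map_sub, ← hr]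
  exact sub_self _

theorem exists_tmul_sub_one_tmul_smul_mem_pow_smul_top (hI : I.FG) (k : ℕ)
    (x : AdicCompletion I R) (m : M) :
    ∃ r : R, x ⊗ₜ[R] m - (1 : AdicCompletion I R) ⊗ₜ[R] (r • m) ∈
      I ^ k • (⊤ : Submodule R (AdicCompletion I R ⊗[R] M)) := by
  obtain ⟨r, hr⟩ := exists_sub_algebraMap_mem_pow_smul_top hI k x
  refine ⟨r, ?_⟩
  have h := Submodule.smul_top_le_comap_smul_top (I ^ k) ((TensorProduct.mk R _ M).flip m) hr
  rwa [Submodule.mem_comap, LinearMap.flip_apply, mk_apply, sub_tmul,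
    Algebra.algebraMap_eq_smul_one, smul_tmul] at h

theorem exists_sub_one_tmul_mem_pow_smul_top (hI : I.FG) (k : ℕ)
    (t : AdicCompletion I R ⊗[R] M) :
    ∃ m : M, t - (1 : AdicCompletion I R) ⊗ₜ[R] m ∈
      I ^ k • (⊤ : Submodule R (AdicCompletion I R ⊗[R] M)) := by
  induction t using TensorProduct.induction_on with
  | zero => exact ⟨0, by simp⟩
  | tmul x m =>
    obtain ⟨r, hr⟩ := exists_tmul_sub_one_tmul_smul_mem_pow_smul_top hI k x m
    exact ⟨r • m, hr⟩
  | add t₁ t₂ h₁ h₂ =>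
    obtain ⟨m₁, hm₁⟩ := h₁
    obtain ⟨m₂, hm₂⟩ := h₂
    refine ⟨m₁ + m₂, ?_⟩
    rw [tmul_add, add_sub_add_comm]
    exact add_mem hm₁ hm₂

theorem mem_pow_smul_top_of_one_tmul_mem (k : ℕ) {m : M}
    (h : (1 : AdicCompletion I R) ⊗ₜ[R] m ∈
      I ^ k • (⊤ : Submodule R (AdicCompletion I R ⊗[R] M))) :
    m ∈ I ^ k • (⊤ : Submodule R M) := by
  have h' := Submodule.smul_top_le_comap_smul_top (I ^ k)
    ((ofTensorProduct I M).restrictScalars R) h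
  rw [Submodule.mem_comap, LinearMap.restrictScalars_apply, ofTensorProduct_tmul, one_smul]
    at h'
  have := pow_smul_top_le_ker_eval I k h'
  rwa [LinearMap.mem_ker, eval_of, Submodule.mkQ_apply, Submodule.Quotient.mk_eq_zero] at this

theorem exists_sub_one_tmul_mem_range_algebraMap (hI : I.FG)
    (hkill : I ^ n • (⊤ : Submodule R S) ≤ 1) (t : AdicCompletion I R ⊗[R] S) :
    ∃ s : S, t - (1 : AdicCompletion I R) ⊗ₜ[R] s ∈
      (algebraMap (AdicCompletion I R) (AdicCompletion I R ⊗[R] S)).range := by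
  obtain ⟨s, hs⟩ := exists_sub_one_tmul_mem_pow_smul_top hI n t
  exact ⟨s, Submodule.mem_one.mp (Algebra.TensorProduct.smul_top_le_one hkill hs)⟩

theorem mem_range_of_one_tmul_mem_range_algebraMap (hI : I.FG)
    (hkill : I ^ n • (⊤ : Submodule R S) ≤ 1) {s : S}
    (hs : (1 : AdicCompletion I R) ⊗ₜ[R] s ∈
      (algebraMap (AdicCompletion I R) (AdicCompletion I R ⊗[R] S)).range) :
    s ∈ (algebraMap R S).range := by
  obtain ⟨x, hx⟩ := hs
  obtain ⟨r, hr⟩ := exists_tmul_sub_one_tmul_smul_mem_pow_smul_top hI n x (1 : S)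
  rw [show x ⊗ₜ[R] (1 : S) = 1 ⊗ₜ s from hx, ← tmul_sub] at hr
  obtain ⟨w, hw⟩ := Submodule.mem_one.mp (hkill (mem_pow_smul_top_of_one_tmul_mem n hr))
  exact ⟨w + r, by rw [map_add, hw, Algebra.algebraMap_eq_smul_one r, sub_add_cancel]⟩

theorem mem_map_pow_of_one_tmul_mem_map_pow {m : ℕ} {s : S}
    (hs : (1 : AdicCompletion I R) ⊗ₜ[R] s ∈
      Ideal.map (algebraMap (AdicCompletion I R) (AdicCompletion I R ⊗[R] S))
        ((I.map (algebraMap R (AdicCompletion I R))) ^ m)) :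
    s ∈ Ideal.map (algebraMap R S) (I ^ m) := by
  rw [← Ideal.map_pow, Ideal.map_map, ← IsScalarTower.algebraMap_eq] at hs
  rw [← Submodule.restrictScalars_mem R, ← Ideal.smul_top_eq_map] at hs ⊢
  exact mem_pow_smul_top_of_one_tmul_mem m hs

theorem exists_sub_one_tmul_mem_map_pow (hI : I.FG)
    (hkill : I ^ n • (⊤ : Submodule R S) ≤ 1) (m : ℕ) (t : AdicCompletion I R ⊗[R] S)
    (ht : ∀ y ∈ (I.map (algebraMap R (AdicCompletion I R))) ^ m,
      algebraMap (AdicCompletion I R) (AdicCompletion I R ⊗[R] S) y * t ∈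
        (algebraMap (AdicCompletion I R) (AdicCompletion I R ⊗[R] S)).range) :
    ∃ s : S, (∀ y ∈ I ^ m, algebraMap R S y * s ∈ (algebraMap R S).range) ∧
      t - (1 : AdicCompletion I R) ⊗ₜ[R] s ∈
        Ideal.map (algebraMap (AdicCompletion I R) (AdicCompletion I R ⊗[R] S))
          ((I.map (algebraMap R (AdicCompletion I R))) ^ m) := by
  have one_tmul_algebraMap : ∀ r : R, (1 : AdicCompletion I R) ⊗ₜ[R] algebraMap R S r =
      algebraMap (AdicCompletion I R) (AdicCompletion I R ⊗[R] S)
        (algebraMap R (AdicCompletion I R) r) := fun r => by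
    rw [← IsScalarTower.algebraMap_apply, Algebra.TensorProduct.algebraMap_apply']
  obtain ⟨s₀, x, hx⟩ := exists_sub_one_tmul_mem_range_algebraMap hI hkill t
  obtain ⟨r, hr⟩ := exists_sub_algebraMap_mem_pow_smul_top hI m x
  rw [Ideal.smul_top_eq_map, Submodule.restrictScalars_mem, Ideal.map_pow] at hr
  have htd : t - (1 : AdicCompletion I R) ⊗ₜ[R] (s₀ + algebraMap R S r) =
      algebraMap (AdicCompletion I R) (AdicCompletion I R ⊗[R] S)
        (x - algebraMap R (AdicCompletion I R) r) := by
    rw [tmul_add, map_sub, hx, one_tmul_algebraMap, sub_add_eq_sub_sub]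
  refine ⟨s₀ + algebraMap R S r, fun y hy => ?_, htd ▸ Ideal.mem_map_of_mem _ hr⟩
  refine mem_range_of_one_tmul_mem_range_algebraMap hI hkill ?_
  rw [← one_mul (1 : AdicCompletion I R), ← Algebra.TensorProduct.tmul_mul_tmul,
    one_tmul_algebraMap, ← sub_sub_cancel t (1 ⊗ₜ _), htd, mul_sub, ← map_mul]
  have hy' :
      algebraMap R (AdicCompletion I R) y ∈ (I.map (algebraMap R (AdicCompletion I R))) ^ m :=
    Ideal.map_pow (algebraMap R (AdicCompletion I R)) I m ▸ Ideal.mem_map_of_mem _ hy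
  exact sub_mem (ht _ hy') ⟨_, rfl⟩

end AdicCompletion

theorem stmt4 (R S : Type) [CommRing R] [IsNoetherianRing R] [CommRing S] [Algebra R S]
    (I : Ideal R) (n : ℕ)
    (hkill : ∀ y ∈ I ^ n, ∀ s : S, algebraMap R S y * s ∈ (algebraMap R S).range) :
    -- S/R → Ŝ/R̂ is bijective:
    (∀ t : AdicCompletion I R ⊗[R] S, ∃ s : S,
        t - (1 : AdicCompletion I R) ⊗ₜ[R] s ∈
          (algebraMap (AdicCompletion I R) (AdicCompletion I R ⊗[R] S)).range) ∧
    (∀ s : S,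
        (1 : AdicCompletion I R) ⊗ₜ[R] s ∈
            (algebraMap (AdicCompletion I R) (AdicCompletion I R ⊗[R] S)).range →
        s ∈ (algebraMap R S).range) ∧
    -- for every m > 0, (R : I^m)/I^m → (R̂ : Î^m)/Î^m is bijective:
    (∀ m : ℕ, 0 < m →
      (∀ t : AdicCompletion I R ⊗[R] S,
        (∀ y ∈ (I.map (algebraMap R (AdicCompletion I R))) ^ m,
            algebraMap (AdicCompletion I R) (AdicCompletion I R ⊗[R] S) y * t ∈
              (algebraMap (AdicCompletion I R) (AdicCompletion I R ⊗[R] S)).range) →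
        ∃ s : S,
          (∀ y ∈ I ^ m, algebraMap R S y * s ∈ (algebraMap R S).range) ∧
          t - (1 : AdicCompletion I R) ⊗ₜ[R] s ∈
            Ideal.map (algebraMap (AdicCompletion I R) (AdicCompletion I R ⊗[R] S))
              ((I.map (algebraMap R (AdicCompletion I R))) ^ m)) ∧
      (∀ s : S,
        (∀ y ∈ I ^ m, algebraMap R S y * s ∈ (algebraMap R S).range) →
        (1 : AdicCompletion I R) ⊗ₜ[R] s ∈
            Ideal.map (algebraMap (AdicCompletion I R) (AdicCompletion I R ⊗[R] S))
              ((I.map (algebraMap R (AdicCompletion I R))) ^ m) →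
        s ∈ Ideal.map (algebraMap R S) (I ^ m))) := by
  have hI : I.FG := I.fg_of_isNoetherianRing
  have hkill' : I ^ n • (⊤ : Submodule R S) ≤ 1 := by
    refine Submodule.smul_le.mpr fun y hy s _ => ?_
    obtain ⟨w, hw⟩ := hkill y hy s
    exact Submodule.mem_one.mpr ⟨w, by rw [hw, Algebra.smul_def]⟩
  exact ⟨AdicCompletion.exists_sub_one_tmul_mem_range_algebraMap hI hkill',
    fun _ => AdicCompletion.mem_range_of_one_tmul_mem_range_algebraMap hI hkill',
    fun m _ => ⟨AdicCompletion.exists_sub_one_tmul_mem_map_pow hI hkill' m,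
      fun _ _ => AdicCompletion.mem_map_pow_of_one_tmul_mem_map_pow⟩⟩
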